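/- arXiv:1011.3736 — 3 statements merged into one kernel-verified Lean document; each statement's English description precedes it below -/
import Mathlib

section
/- Under Assumption ND, for every fixed A ≥ 0 the map P ↦ λ(S(A, P)) is monotone nondecreasing and continuous on ℝ. -/
open MeasureTheory Set Filter

/-!
`P ↦ λ(S(A, P))` is the distribution function of the push-forward `ν` of Lebesgue measure on
`[0, ξmax]` under `g = b + A·e`, so it is monotone, and continuous as soon as `ν` has no atoms,
i.e. every level set `{g = c}` is null. A level set consists of critical points of `g`, a null set
by Assumption ND, and of points where `g' ≠ 0`, which are isolated in it and hence countable.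
-/

theorem countable_setOf_eq_and_deriv_ne_zero {𝕜 F : Type*} [NontriviallyNormedField 𝕜]
    [SecondCountableTopology 𝕜] [NormedAddCommGroup F] [NormedSpace 𝕜 F]
    {f f' : 𝕜 → F} {s : Set 𝕜} (hf : ∀ x ∈ s, HasDerivAt f (f' x) x) (c : F) :
    {x ∈ s | f x = c ∧ f' x ≠ 0}.Countable := by
  have hdiscrete : DiscreteTopology {x ∈ s | f x = c ∧ f' x ≠ 0} := by
    rw [discreteTopology_subtype_iff]
    rintro x ⟨hxs, -, hf'x⟩
    refine inf_principal_eq_bot.2 (mem_of_superset ((hf x hxs).eventually_ne (c := c) hf'x) ?_)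
    rintro z hz ⟨-, hfz, -⟩
    exact hz hfz
  exact countable_coe_iff.1 (TopologicalSpace.separableSpace_iff_countable.1 inferInstance)

theorem measure_setOf_eq_eq_zero_of_hasDerivAt {μ : Measure ℝ} [NullSingletonClass μ]
    {f f' : ℝ → ℝ} {s : Set ℝ} (hf : ∀ x ∈ s, HasDerivAt f (f' x) x)
    (hcrit : μ {x ∈ s | f' x = 0} = 0) (c : ℝ) : μ {x ∈ s | f x = c} = 0 := by
  refine measure_mono_null (fun x ⟨hxs, hfx⟩ => ?_)
    (measure_union_null ((countable_setOf_eq_and_deriv_ne_zero hf c).measure_zero μ) hcrit)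
  by_cases h : f' x = 0
  exacts [Or.inr ⟨hxs, h⟩, Or.inl ⟨hxs, hfx, h⟩]

theorem continuous_measureReal_Iic (ν : Measure ℝ) [IsFiniteMeasure ν] [NullSingletonClass ν] :
    Continuous fun P => ν.real (Iic P) := by
  have hprimitive : ∀ P, ν.real (Iic P) = ν.real (Iic 0) + ∫ _ in (0:ℝ)..P, (1:ℝ) ∂ν := by
    intro P
    rw [← intervalIntegral.integral_Iic_sub_Iic (integrableOn_const (by simp))
      (integrableOn_const (by simp))]
    simp
  exact (continuous_const.add (intervalIntegral.continuous_primitive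
    (fun _ _ => intervalIntegrable_const) 0)).congr fun P => (hprimitive P).symm

theorem stmt_2_general (ξmax : ℝ) (b e : ℝ → ℝ)
    (hb : ∀ ξ ∈ Icc (0:ℝ) ξmax, DifferentiableAt ℝ b ξ)
    (he : ∀ ξ ∈ Icc (0:ℝ) ξmax, DifferentiableAt ℝ e ξ)
    (hND : ∀ A : ℝ, 0 ≤ A →
      volume {ξ ∈ Icc (0:ℝ) ξmax | deriv b ξ + A * deriv e ξ = 0} = 0)
    (S : ℝ → ℝ → Set ℝ)
    (hS : ∀ A P, S A P = {ξ ∈ Icc (0:ℝ) ξmax | b ξ + A * e ξ ≤ P}) :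
    ∀ A : ℝ, 0 ≤ A →
      Monotone (fun P : ℝ => (volume (S A P)).toReal) ∧
      Continuous (fun P : ℝ => (volume (S A P)).toReal) := by
  intro A hA
  set g : ℝ → ℝ := fun ξ => b ξ + A * e ξ
  have hg : ∀ ξ ∈ Icc (0:ℝ) ξmax, HasDerivAt g (deriv b ξ + A * deriv e ξ) ξ := fun ξ hξ =>
    (hb ξ hξ).hasDerivAt.add ((he ξ hξ).hasDerivAt.const_mul A)
  have hg_meas : AEMeasurable g (volume.restrict (Icc 0 ξmax)) :=
    ContinuousOn.aemeasurable (fun ξ hξ => (hg ξ hξ).continuousAt.continuousWithinAt)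
      measurableSet_Icc
  set ν := (volume.restrict (Icc (0:ℝ) ξmax)).map g
  have hν : ∀ t, MeasurableSet t → ν t = volume {ξ ∈ Icc (0:ℝ) ξmax | g ξ ∈ t} := fun t ht => by
    rw [Measure.map_apply_of_aemeasurable hg_meas ht, Measure.restrict_apply' measurableSet_Icc,
      inter_comm]
    rfl
  have : NullSingletonClass ν :=
    ⟨fun c => (hν _ (measurableSet_singleton c)).trans
      (measure_setOf_eq_eq_zero_of_hasDerivAt hg (hND A hA) c)⟩
  have hSν : ∀ P, (volume (S A P)).toReal = ν.real (Iic P) := fun P => by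
    rw [measureReal_def, hν _ measurableSet_Iic, hS]
    rfl
  simp_rw [hSν]
  exact ⟨fun P Q hPQ => measureReal_mono (Iic_subset_Iic.2 hPQ), continuous_measureReal_Iic ν⟩

/-- Under Assumption ND, for every fixed `A ≥ 0` the map `P ↦ λ(S(A, P))` is monotone
nondecreasing and continuous on `ℝ`, where `S(A, P) = {ξ ∈ [0, ξmax] | b ξ + A * e ξ ≤ P}`. -/
theorem stmt_2 (ξmax : ℝ) (hξmax : 0 < ξmax) (b e : ℝ → ℝ)
    (hb : ∀ ξ ∈ Icc (0:ℝ) ξmax, DifferentiableAt ℝ b ξ)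
    (hb' : ContinuousOn (deriv b) (Icc (0:ℝ) ξmax))
    (hbpos : ∀ ξ ∈ Icc (0:ℝ) ξmax, 0 < deriv b ξ)
    (he : ∀ ξ ∈ Icc (0:ℝ) ξmax, DifferentiableAt ℝ e ξ)
    (he' : ContinuousOn (deriv e) (Icc (0:ℝ) ξmax))
    (hepos : ∀ ξ ∈ Icc (0:ℝ) ξmax, 0 < e ξ)
    (hND : ∀ A : ℝ, 0 ≤ A →
      volume {ξ ∈ Icc (0:ℝ) ξmax | deriv b ξ + A * deriv e ξ = 0} = 0)
    (S : ℝ → ℝ → Set ℝ)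
    (hS : ∀ A P, S A P = {ξ ∈ Icc (0:ℝ) ξmax | b ξ + A * e ξ ≤ P}) :
    ∀ A : ℝ, 0 ≤ A →
      Monotone (fun P : ℝ => (volume (S A P)).toReal) ∧
      Continuous (fun P : ℝ => (volume (S A P)).toReal) :=
  stmt_2_general ξmax b e hb he hND S hS
end

section
/- (Lemma L.2(i)) Under Assumption ND, for every fixed D ∈ [0, ξ_max] the map A ↦ μ_e(A, D) is non-increasing on [0, ∞): if 0 ≤ A₁ < A₂ then μ_e(A₂, D) ≤ μ_e(A₁, D). -/
/-!
By Assumption ND and since a level set of a function meets the points of nonzero derivative only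
in isolated points, every level set of `g_A = b + A e` is null. Hence `P ↦ λ(S(A, P))` is
continuous and, for `D > 0`, the set `S_p(A, D)` has measure exactly `D` for every `A ≥ 0`.
Write `Sᵢ = S_p(Aᵢ, D)` and `Bᵢ = B(Aᵢ, D)`: on `S₂ \ S₁` we have `e ≤ c := (B₂ - B₁)/(A₂ - A₁)`,
on `S₁ \ S₂` we have `c ≤ e`, and the two differences have the same measure, so
`∫_{S₂} e ≤ ∫_{S₁} e`. For `D = 0` the infimum defining `B` is taken over all of `ℝ`, and its
junk value is `B(A, 0) = sInf univ = 0`; then `S_p(A, 0) = S(A, 0)` shrinks as `A` grows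
because `e > 0`.
-/

open MeasureTheory Set Filter Topology
open scoped ENNReal

theorem countable_setOf_eq_and_deriv_ne_zero_s9 (g : ℝ → ℝ) (P : ℝ) :
    {x | g x = P ∧ deriv g x ≠ 0}.Countable := by
  refine (HereditarilyLindelofSpace.isLindelof _).countable_of_isDiscrete
    (isDiscrete_iff_nhdsNE.2 fun x hx => inf_principal_eq_bot.2 ?_)
  filter_upwards [(differentiableAt_of_deriv_ne_zero hx.2).hasDerivAt.eventually_ne hx.2]
    with y hy hyK
  exact hy (hyK.1.trans hx.1.symm)

theorem measure_setOf_eq_eq_zero_of_measure_deriv_eq_zero {μ : Measure ℝ}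
    [NullSingletonClass μ] {g : ℝ → ℝ} {s : Set ℝ} (h : μ {x ∈ s | deriv g x = 0} = 0)
    (P : ℝ) : μ {x ∈ s | g x = P} = 0 := by
  refine measure_mono_null (t := {x ∈ s | deriv g x = 0} ∪ {x | g x = P ∧ deriv g x ≠ 0}) ?_
    (measure_union_null h ((countable_setOf_eq_and_deriv_ne_zero_s9 g P).measure_zero μ))
  rintro x ⟨hxs, hx⟩
  by_cases hd : deriv g x = 0
  exacts [Or.inl ⟨hxs, hd⟩, Or.inr ⟨hx, hd⟩]

section Sublevel

variable {α : Type*}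

def sublevel (s : Set α) (g : α → ℝ) (P : ℝ) : Set α := {x ∈ s | g x ≤ P}

theorem sublevel_subset (s : Set α) (g : α → ℝ) (P : ℝ) : sublevel s g P ⊆ s := sep_subset _ _

theorem sublevel_mono (s : Set α) (g : α → ℝ) : Monotone (sublevel s g) :=
  fun _ _ hPQ _ hx => ⟨hx.1, hx.2.trans hPQ⟩

theorem sublevel_add_mul_anti {s : Set α} {b e : α → ℝ} (he : ∀ x ∈ s, 0 ≤ e x) {A₁ A₂ : ℝ}
    (hA : A₁ ≤ A₂) (P : ℝ) :
    sublevel s (fun x => b x + A₂ * e x) P ⊆ sublevel s (fun x => b x + A₁ * e x) P :=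
  fun x hx =>
    ⟨hx.1, le_trans (add_le_add_right (mul_le_mul_of_nonneg_right hA (he x hx.1)) _) hx.2⟩

theorem IsCompact.sublevel [TopologicalSpace α] [T2Space α] {s : Set α} (hs : IsCompact s)
    {g : α → ℝ} (hg : ContinuousOn g s) (P : ℝ) : IsCompact (sublevel s g P) :=
  hs.of_isClosed_subset (hg.preimage_isClosed_of_isClosed hs.isClosed isClosed_Iic)
    (sublevel_subset s g P)

theorem sublevel_eq_iInter {s : Set α} {g : α → ℝ} {B : ℝ} {v : ℕ → ℝ} (hBv : ∀ n, B ≤ v n)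
    (hv : Tendsto v atTop (𝓝 B)) : sublevel s g B = ⋂ n, sublevel s g (v n) := by
  refine Subset.antisymm (subset_iInter fun n => sublevel_mono s g (hBv n)) fun x hx => ?_
  have hx : ∀ n, x ∈ sublevel s g (v n) := mem_iInter.1 hx
  exact ⟨(hx 0).1, ge_of_tendsto hv (Eventually.of_forall fun n => (hx n).2)⟩

theorem setOf_lt_eq_iUnion_sublevel {s : Set α} {g : α → ℝ} {B : ℝ} {u : ℕ → ℝ}
    (huB : ∀ n, u n < B) (hu : Tendsto u atTop (𝓝 B)) :
    {x ∈ s | g x < B} = ⋃ n, sublevel s g (u n) := by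
  refine Subset.antisymm (fun x ⟨hxs, hx⟩ => ?_) (iUnion_subset fun n x hx => ⟨hx.1, ?_⟩)
  · obtain ⟨n, hn⟩ := (hu.eventually (lt_mem_nhds hx)).exists
    exact mem_iUnion.2 ⟨n, hxs, hn.le⟩
  · exact hx.2.trans_lt (huB n)

variable [MeasurableSpace α]

/-- With `g = b + A e` on `s = [0, ξ_max]` this is the paper's `B(A, D)`. -/
noncomputable def clearingPrice (μ : Measure α) (s : Set α) (g : α → ℝ) (D : ℝ) : ℝ :=
  sInf {P | D ≤ μ.real (sublevel s g P)}

theorem clearingPrice_zero (μ : Measure α) (s : Set α) (g : α → ℝ) :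
    clearingPrice μ s g 0 = 0 := by
  simp [clearingPrice, measureReal_nonneg]

theorem nonempty_setOf_le_measureReal_sublevel {μ : Measure α} {s : Set α} {g : α → ℝ} {D : ℝ}
    (hbdd : BddAbove (g '' s)) (hDs : D ≤ μ.real s) :
    {P | D ≤ μ.real (sublevel s g P)}.Nonempty := by
  obtain ⟨M, hM⟩ := hbdd
  have : sublevel s g M = s := sep_eq_self_iff_mem_true.2 fun x hx => hM (mem_image_of_mem g hx)
  exact ⟨M, show D ≤ μ.real (sublevel s g M) by rwa [this]⟩

theorem bddBelow_setOf_le_measureReal_sublevel {μ : Measure α} {s : Set α} {g : α → ℝ} {D : ℝ}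
    (hbdd : BddBelow (g '' s)) (hD : 0 < D) :
    BddBelow {P | D ≤ μ.real (sublevel s g P)} := by
  obtain ⟨m, hm⟩ := hbdd
  refine ⟨m, fun P hP => le_of_not_gt fun hPm => hD.not_ge ?_⟩
  have : sublevel s g P = ∅ := eq_empty_of_forall_notMem fun x hx =>
    (hx.2.trans_lt hPm).not_ge (hm (mem_image_of_mem g hx.1))
  simpa [this] using hP

theorem measure_sublevel_clearingPrice {μ : Measure α} {s : Set α} {g : α → ℝ} {D : ℝ}
    (hμs : μ s ≠ ∞) (hmeas : ∀ P, NullMeasurableSet (sublevel s g P) μ)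
    (hlev : ∀ P, μ {x ∈ s | g x = P} = 0) (hbddAbove : BddAbove (g '' s))
    (hbddBelow : BddBelow (g '' s)) (hD : 0 < D) (hDs : D ≤ μ.real s) :
    μ (sublevel s g (clearingPrice μ s g D)) = ENNReal.ofReal D := by
  set B := clearingPrice μ s g D
  have hfin : ∀ P, μ (sublevel s g P) ≠ ∞ :=
    fun P => ne_top_of_le_ne_top hμs (measure_mono (sublevel_subset s g P))
  have hmem : ∀ P, D ≤ μ.real (sublevel s g P) ↔ ENNReal.ofReal D ≤ μ (sublevel s g P) :=
    fun P => (ENNReal.ofReal_le_iff_le_toReal (hfin P)).symm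
  have hge : ENNReal.ofReal D ≤ μ (sublevel s g B) := by
    obtain ⟨v, hv_anti, hBv, hv⟩ := exists_seq_strictAnti_tendsto B
    have hanti : Antitone fun n => sublevel s g (v n) :=
      (sublevel_mono s g).comp_antitone hv_anti.antitone
    rw [sublevel_eq_iInter (fun n => (hBv n).le) hv,
      hanti.measure_iInter (fun n => hmeas _) ⟨0, hfin _⟩]
    refine le_iInf fun n => (hmem _).1 ?_
    obtain ⟨P, hP, hPv⟩ :=
      exists_lt_of_csInf_lt (nonempty_setOf_le_measureReal_sublevel hbddAbove hDs) (hBv n)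
    exact hP.trans (measureReal_mono (sublevel_mono s g hPv.le) (hfin _))
  have hlt : μ {x ∈ s | g x < B} ≤ ENNReal.ofReal D := by
    obtain ⟨u, hu_mono, huB, hu⟩ := exists_seq_strictMono_tendsto B
    have hmono : Monotone fun n => sublevel s g (u n) := (sublevel_mono s g).comp hu_mono.monotone
    rw [setOf_lt_eq_iUnion_sublevel huB hu, hmono.measure_iUnion]
    exact iSup_le fun n => le_of_not_ge fun h => notMem_of_lt_csInf (huB n)
      (bddBelow_setOf_le_measureReal_sublevel hbddBelow hD) ((hmem _).2 h)
  refine le_antisymm ?_ hge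
  calc μ (sublevel s g B) ≤ μ ({x ∈ s | g x < B} ∪ {x ∈ s | g x = B}) :=
        measure_mono fun x ⟨hxs, hx⟩ => hx.lt_or_eq.imp (⟨hxs, ·⟩) (⟨hxs, ·⟩)
    _ ≤ μ {x ∈ s | g x < B} + μ {x ∈ s | g x = B} := measure_union_le _ _
    _ ≤ ENNReal.ofReal D := by rw [hlev, add_zero]; exact hlt

theorem setIntegral_le_setIntegral_of_measure_eq {μ : Measure α} {f : α → ℝ} {s t : Set α}
    {c : ℝ} (hs : MeasurableSet s) (ht : MeasurableSet t) (hμ : μ s = μ t) (hμt : μ t ≠ ∞)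
    (hfs : IntegrableOn f s μ) (hft : IntegrableOn f t μ)
    (hle : ∀ x ∈ s \ t, f x ≤ c) (hge : ∀ x ∈ t \ s, c ≤ f x) :
    ∫ x in s, f x ∂μ ≤ ∫ x in t, f x ∂μ := by
  have hsdiff : μ.real (s \ t) = μ.real (t \ s) := by
    rw [measureReal_def, measureReal_def, measure_sdiff_symm hs.nullMeasurableSet
      ht.nullMeasurableSet hμ (ne_top_of_le_ne_top hμt (measure_mono inter_subset_right))]
  rw [← integral_inter_add_sdiff ht hfs, ← integral_inter_add_sdiff hs hft, inter_comm t s]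
  refine add_le_add le_rfl ?_
  calc ∫ x in s \ t, f x ∂μ ≤ ∫ _ in s \ t, c ∂μ :=
        setIntegral_mono_on (hfs.mono_set sdiff_subset)
          (integrableOn_const (ne_top_of_le_ne_top (hμ ▸ hμt) (measure_mono sdiff_subset)))
          (hs.diff ht) hle
    _ = c * μ.real (t \ s) := by rw [setIntegral_const, smul_eq_mul, mul_comm, hsdiff]
    _ ≤ ∫ x in t \ s, f x ∂μ :=
        setIntegral_ge_of_const_le_real (ht.diff hs)
          (ne_top_of_le_ne_top hμt (measure_mono sdiff_subset)) hge (hft.mono_set sdiff_subset)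

end Sublevel

section Compact

variable {α : Type*} [TopologicalSpace α] [T2Space α] [MeasurableSpace α] [OpensMeasurableSpace α]
  {μ : Measure α} [IsFiniteMeasureOnCompacts μ] {s : Set α} {b e : α → ℝ}

theorem setIntegral_sublevel_add_mul_anti (hs : IsCompact s) (he : ContinuousOn e s)
    (he₀ : ∀ x ∈ s, 0 ≤ e x) {A₁ A₂ : ℝ} (hA : A₁ ≤ A₂) {P : ℝ} :
    ∫ x in sublevel s (fun x => b x + A₂ * e x) P, e x ∂μ ≤
      ∫ x in sublevel s (fun x => b x + A₁ * e x) P, e x ∂μ :=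
  setIntegral_mono_set ((he.integrableOn_compact hs).mono_set (sublevel_subset _ _ _))
    (ae_restrict_of_ae_restrict_of_subset (sublevel_subset _ _ _)
      (ae_restrict_of_forall_mem hs.measurableSet he₀))
    (sublevel_add_mul_anti he₀ hA P).eventuallyLE

theorem setIntegral_sublevel_clearingPrice_anti (hs : IsCompact s) (hb : ContinuousOn b s)
    (he : ContinuousOn e s) {A₁ A₂ D : ℝ}
    (hlev₁ : ∀ P, μ {x ∈ s | b x + A₁ * e x = P} = 0)
    (hlev₂ : ∀ P, μ {x ∈ s | b x + A₂ * e x = P} = 0)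
    (hA : A₁ < A₂) (hD : 0 < D) (hDs : D ≤ μ.real s) :
    ∫ x in sublevel s (fun x => b x + A₂ * e x)
        (clearingPrice μ s (fun x => b x + A₂ * e x) D), e x ∂μ ≤
      ∫ x in sublevel s (fun x => b x + A₁ * e x)
        (clearingPrice μ s (fun x => b x + A₁ * e x) D), e x ∂μ := by
  have hg : ∀ A : ℝ, ContinuousOn (fun x => b x + A * e x) s :=
    fun A => hb.add (continuousOn_const.mul he)
  have hvol : ∀ A : ℝ, (∀ P, μ {x ∈ s | b x + A * e x = P} = 0) →
      μ (sublevel s (fun x => b x + A * e x) (clearingPrice μ s (fun x => b x + A * e x) D)) =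
        ENNReal.ofReal D := fun A hlev =>
    measure_sublevel_clearingPrice hs.measure_lt_top.ne
      (fun P => (hs.sublevel (hg A) P).measurableSet.nullMeasurableSet) hlev
      (hs.bddAbove_image (hg A)) (hs.bddBelow_image (hg A)) hD hDs
  set B₁ := clearingPrice μ s (fun x => b x + A₁ * e x) D
  set B₂ := clearingPrice μ s (fun x => b x + A₂ * e x) D
  have hK₁ := hs.sublevel (hg A₁) B₁
  have hK₂ := hs.sublevel (hg A₂) B₂
  refine setIntegral_le_setIntegral_of_measure_eq (c := (B₂ - B₁) / (A₂ - A₁))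
    hK₂.measurableSet hK₁.measurableSet (by rw [hvol A₂ hlev₂, hvol A₁ hlev₁])
    hK₁.measure_lt_top.ne ((he.mono (sublevel_subset _ _ _)).integrableOn_compact hK₂)
    ((he.mono (sublevel_subset _ _ _)).integrableOn_compact hK₁) ?_ ?_
  · rintro x ⟨⟨hxs, hx₂⟩, hx₁⟩
    have : B₁ < b x + A₁ * e x := lt_of_not_ge fun h => hx₁ ⟨hxs, h⟩
    rw [le_div_iff₀ (sub_pos.2 hA)]
    linarith
  · rintro x ⟨⟨hxs, hx₁⟩, hx₂⟩
    have : B₂ < b x + A₂ * e x := lt_of_not_ge fun h => hx₂ ⟨hxs, h⟩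
    rw [div_le_iff₀ (sub_pos.2 hA)]
    linarith

end Compact

theorem stmt_9_general (ξmax : ℝ) (κ : ℝ) (hκ : 0 < κ) (b e : ℝ → ℝ)
    (hb : ∀ ξ ∈ Icc (0:ℝ) ξmax, DifferentiableAt ℝ b ξ)
    (he : ∀ ξ ∈ Icc (0:ℝ) ξmax, DifferentiableAt ℝ e ξ)
    (hepos : ∀ ξ ∈ Icc (0:ℝ) ξmax, 0 < e ξ)
    (hND : ∀ A : ℝ, 0 ≤ A →
      volume {ξ ∈ Icc (0:ℝ) ξmax | deriv b ξ + A * deriv e ξ = 0} = 0)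
    (S : ℝ → ℝ → Set ℝ)
    (hS : ∀ A P, S A P = {ξ ∈ Icc (0:ℝ) ξmax | b ξ + A * e ξ ≤ P})
    (B : ℝ → ℝ → ℝ)
    (hB : ∀ A D, B A D = sInf {P : ℝ | D ≤ (volume (S A P)).toReal})
    (Sp : ℝ → ℝ → Set ℝ)
    (hSp : ∀ A D, Sp A D = S A (B A D))
    (μe : ℝ → ℝ → ℝ)
    (hμe : ∀ A D, μe A D = κ * ∫ ξ in Sp A D, e ξ) :
    ∀ D ∈ Icc (0:ℝ) ξmax, ∀ A₁ A₂ : ℝ, 0 ≤ A₁ → A₁ < A₂ →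
      μe A₂ D ≤ μe A₁ D := by
  intro D hD A₁ A₂ hA₁ hA₁₂
  have hSp' : ∀ A, Sp A D = sublevel (Icc 0 ξmax) (fun ξ => b ξ + A * e ξ)
      (clearingPrice volume (Icc 0 ξmax) (fun ξ => b ξ + A * e ξ) D) := by
    intro A
    simp only [hSp, hB, hS]
    rfl
  rw [hμe, hμe, hSp', hSp']
  refine mul_le_mul_of_nonneg_left ?_ hκ.le
  have hec : ContinuousOn e (Icc 0 ξmax) := fun ξ hξ => (he ξ hξ).continuousAt.continuousWithinAt
  rcases hD.1.eq_or_lt with rfl | hD₀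
  · simp only [clearingPrice_zero]
    exact setIntegral_sublevel_add_mul_anti isCompact_Icc hec (fun ξ hξ => (hepos ξ hξ).le)
      hA₁₂.le
  have hlev : ∀ A, 0 ≤ A → ∀ P, volume {ξ ∈ Icc 0 ξmax | b ξ + A * e ξ = P} = 0 := by
    intro A hA
    refine measure_setOf_eq_eq_zero_of_measure_deriv_eq_zero (Eq.trans ?_ (hND A hA))
    refine congrArg volume (sep_ext_iff.2 fun ξ hξ => ?_)
    have hd : HasDerivAt (fun x => b x + A * e x) (deriv b ξ + A * deriv e ξ) ξ :=
      (hb ξ hξ).hasDerivAt.add ((he ξ hξ).hasDerivAt.const_mul A)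
    rw [hd.deriv]
  exact setIntegral_sublevel_clearingPrice_anti isCompact_Icc
    (fun ξ hξ => (hb ξ hξ).continuousAt.continuousWithinAt) hec (hlev A₁ hA₁)
    (hlev A₂ (hA₁.trans hA₁₂.le)) hA₁₂ hD₀
    (by rw [Real.volume_real_Icc_of_le (hD.1.trans hD.2), sub_zero]; exact hD.2)

/-- (Lemma L.2(i)) Under Assumption ND, for every fixed `D ∈ [0, ξmax]` the map `A ↦ μ_e(A, D)`
is non-increasing on `[0, ∞)`. -/
theorem stmt_9 (ξmax : ℝ) (hξmax : 0 < ξmax) (κ : ℝ) (hκ : 0 < κ) (b e : ℝ → ℝ)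
    (hb : ∀ ξ ∈ Icc (0:ℝ) ξmax, DifferentiableAt ℝ b ξ)
    (hb' : ContinuousOn (deriv b) (Icc (0:ℝ) ξmax))
    (hbpos : ∀ ξ ∈ Icc (0:ℝ) ξmax, 0 < deriv b ξ)
    (he : ∀ ξ ∈ Icc (0:ℝ) ξmax, DifferentiableAt ℝ e ξ)
    (he' : ContinuousOn (deriv e) (Icc (0:ℝ) ξmax))
    (hepos : ∀ ξ ∈ Icc (0:ℝ) ξmax, 0 < e ξ)
    (hND : ∀ A : ℝ, 0 ≤ A →
      volume {ξ ∈ Icc (0:ℝ) ξmax | deriv b ξ + A * deriv e ξ = 0} = 0)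
    (S : ℝ → ℝ → Set ℝ)
    (hS : ∀ A P, S A P = {ξ ∈ Icc (0:ℝ) ξmax | b ξ + A * e ξ ≤ P})
    (B : ℝ → ℝ → ℝ)
    (hB : ∀ A D, B A D = sInf {P : ℝ | D ≤ (volume (S A P)).toReal})
    (Sp : ℝ → ℝ → Set ℝ)
    (hSp : ∀ A D, Sp A D = S A (B A D))
    (μe : ℝ → ℝ → ℝ)
    (hμe : ∀ A D, μe A D = κ * ∫ ξ in Sp A D, e ξ) :
    ∀ D ∈ Icc (0:ℝ) ξmax, ∀ A₁ A₂ : ℝ, 0 ≤ A₁ → A₁ < A₂ →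
      μe A₂ D ≤ μe A₁ D :=
  stmt_9_general ξmax κ hκ b e hb he hepos hND S hS B hB Sp hSp μe hμe
end

section
/- For the parametric stack specification, every set of active generation units is an interval: let ξ_max > 0, 0 ≤ b̲ < b̄, θ₁ > 2, 0 ≤ e̲ < ē, 0 < θ₂ < 1, and for A ≥ 0 define g(A, ξ) := b̲ + (b̄ − b̲)·(ξ/ξ_max)^{θ₁} + A·(ē − (ē − e̲)·(ξ/ξ_max)^{θ₂}) for ξ ∈ [0, ξ_max]. Then for every A ≥ 0 and every P ∈ ℝ, the sublevel set S(A, P) := {ξ ∈ [0, ξ_max] : g(A, ξ) ≤ P} is either empty or a closed interval [ξ₁, ξ₂] with 0 ≤ ξ₁ ≤ ξ₂ ≤ ξ_max. -/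
open Set

/-! For `θ₁ ≥ 1` the bid stack is convex in `ξ`, and for `θ₂ ≤ 1` the emissions stack is
concave, so with `A ≥ 0` the combined stack `g(A, ·)` is convex and continuous on `[0, ξmax]`.
Its sublevel sets are then closed convex subsets of a compact interval, hence empty or closed
intervals. -/

lemma ConvexOn.comp_div_const {f : ℝ → ℝ} {c : ℝ} (hc : 0 < c) (hf : ConvexOn ℝ (Ici 0) f) :
    ConvexOn ℝ (Ici 0) fun x => f (x / c) := by
  refine ⟨convex_Ici 0, fun x hx y hy a b ha hb hab => ?_⟩
  have hdiv : (a • x + b • y) / c = a • (x / c) + b • (y / c) := by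
    simp only [smul_eq_mul]; ring
  simpa only [hdiv] using hf.2 (div_nonneg hx hc.le) (div_nonneg hy hc.le) ha hb hab

lemma ConcaveOn.comp_div_const {f : ℝ → ℝ} {c : ℝ} (hc : 0 < c) (hf : ConcaveOn ℝ (Ici 0) f) :
    ConcaveOn ℝ (Ici 0) fun x => f (x / c) :=
  neg_convexOn_iff.1 (hf.neg.comp_div_const hc)

lemma convexOn_bidStack_add_mul_emissionsStack {ξmax bl bu θ₁ el eu θ₂ A : ℝ} (hξmax : 0 < ξmax)
    (hb : bl ≤ bu) (hθ₁ : 1 ≤ θ₁) (he : el ≤ eu) (hθ₂0 : 0 ≤ θ₂) (hθ₂1 : θ₂ ≤ 1) (hA : 0 ≤ A) :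
    ConvexOn ℝ (Ici 0) fun ξ =>
      bl + (bu - bl) * (ξ / ξmax) ^ θ₁ + A * (eu - (eu - el) * (ξ / ξmax) ^ θ₂) := by
  have hbid := ((convexOn_rpow hθ₁).comp_div_const hξmax).smul (sub_nonneg.2 hb)
  have hemis := ((Real.concaveOn_rpow hθ₂0 hθ₂1).comp_div_const hξmax).smul
    (mul_nonneg hA (sub_nonneg.2 he))
  refine ((hbid.add hemis.neg).add_const (bl + A * eu)).congr fun ξ _ => ?_
  simp only [Pi.add_apply, Pi.neg_apply, smul_eq_mul]
  ring

theorem IsClosed.eq_empty_or_eq_Icc_of_convex {S : Set ℝ} {a b : ℝ} (hS : IsClosed S)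
    (hconv : Convex ℝ S) (hsub : S ⊆ Icc a b) :
    S = ∅ ∨ ∃ x₁ x₂, a ≤ x₁ ∧ x₁ ≤ x₂ ∧ x₂ ≤ b ∧ S = Icc x₁ x₂ := by
  rcases S.eq_empty_or_nonempty with hempty | hne
  · exact Or.inl hempty
  have hcpt : IsCompact S := isCompact_Icc.of_isClosed_subset hS hsub
  have heq : S = Icc (sInf S) (sSup S) :=
    eq_Icc_of_connected_compact ⟨hne, hconv.isPreconnected⟩ hcpt
  exact Or.inr ⟨sInf S, sSup S, (hsub (hcpt.sInf_mem hne)).1, nonempty_Icc.1 (heq ▸ hne),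
    (hsub (hcpt.sSup_mem hne)).2, heq⟩

theorem ConvexOn.sep_le_eq_empty_or_eq_Icc {f : ℝ → ℝ} {a b : ℝ}
    (hf : ConvexOn ℝ (Icc a b) f) (hcont : ContinuousOn f (Icc a b)) (r : ℝ) :
    {x ∈ Icc a b | f x ≤ r} = ∅ ∨
      ∃ x₁ x₂, a ≤ x₁ ∧ x₁ ≤ x₂ ∧ x₂ ≤ b ∧ {x ∈ Icc a b | f x ≤ r} = Icc x₁ x₂ :=
  IsClosed.eq_empty_or_eq_Icc_of_convex
    (hcont.preimage_isClosed_of_isClosed isClosed_Icc isClosed_Iic) (hf.convex_le r)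
    (sep_subset _ _)

theorem stmt_14_general (ξmax bl bu θ₁ el eu θ₂ : ℝ)
    (hξmax : 0 < ξmax) (hb : bl < bu) (hθ₁ : 2 < θ₁)
    (he : el < eu) (hθ₂0 : 0 < θ₂) (hθ₂1 : θ₂ < 1) :
    ∀ A : ℝ, 0 ≤ A → ∀ P : ℝ,
      {ξ ∈ Icc (0:ℝ) ξmax | bl + (bu - bl) * (ξ / ξmax) ^ θ₁ +
          A * (eu - (eu - el) * (ξ / ξmax) ^ θ₂) ≤ P} = ∅ ∨
      ∃ ξ₁ ξ₂ : ℝ, 0 ≤ ξ₁ ∧ ξ₁ ≤ ξ₂ ∧ ξ₂ ≤ ξmax ∧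
        {ξ ∈ Icc (0:ℝ) ξmax | bl + (bu - bl) * (ξ / ξmax) ^ θ₁ +
          A * (eu - (eu - el) * (ξ / ξmax) ^ θ₂) ≤ P} = Icc ξ₁ ξ₂ := by
  intro A hA P
  have hconv := (convexOn_bidStack_add_mul_emissionsStack hξmax hb.le
    (one_le_two.trans hθ₁.le) he.le hθ₂0.le hθ₂1.le hA).subset Icc_subset_Ici_self
    (convex_Icc 0 ξmax)
  have hcont : Continuous fun ξ : ℝ =>
      bl + (bu - bl) * (ξ / ξmax) ^ θ₁ + A * (eu - (eu - el) * (ξ / ξmax) ^ θ₂) := by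
    fun_prop (disch := positivity)
  exact hconv.sep_le_eq_empty_or_eq_Icc hcont.continuousOn P

/-- For the parametric stack specification, for every `A ≥ 0` and every `P : ℝ`, the
sublevel set `S(A, P) = {ξ ∈ [0, ξmax] | g(A, ξ) ≤ P}` is either empty or a closed
interval `[ξ₁, ξ₂]` with `0 ≤ ξ₁ ≤ ξ₂ ≤ ξmax`. -/
theorem stmt_14 (ξmax bl bu θ₁ el eu θ₂ : ℝ)
    (hξmax : 0 < ξmax) (hbl : 0 ≤ bl) (hb : bl < bu) (hθ₁ : 2 < θ₁)
    (hel : 0 ≤ el) (he : el < eu) (hθ₂0 : 0 < θ₂) (hθ₂1 : θ₂ < 1) :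
    ∀ A : ℝ, 0 ≤ A → ∀ P : ℝ,
      {ξ ∈ Icc (0:ℝ) ξmax | bl + (bu - bl) * (ξ / ξmax) ^ θ₁ +
          A * (eu - (eu - el) * (ξ / ξmax) ^ θ₂) ≤ P} = ∅ ∨
      ∃ ξ₁ ξ₂ : ℝ, 0 ≤ ξ₁ ∧ ξ₁ ≤ ξ₂ ∧ ξ₂ ≤ ξmax ∧
        {ξ ∈ Icc (0:ℝ) ξmax | bl + (bu - bl) * (ξ / ξmax) ^ θ₁ +
          A * (eu - (eu - el) * (ξ / ξmax) ^ θ₂) ≤ P} = Icc ξ₁ ξ₂ :=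
  stmt_14_general ξmax bl bu θ₁ el eu θ₂ hξmax hb hθ₁ he hθ₂0 hθ₂1
end
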